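/- arXiv:1204.3847 — 2 statements merged into one kernel-verified Lean document; each statement's English description precedes it below -/
import Mathlib

section
/- If y satisfies the recurrence y(j+1) + (λ - B j - 2) y(j) + y(j-1) = 0 with y(0) = 0 and y(1) = 1, and p is odd, then λ = 2 + B(p+1)/2 is an eigenvalue, i.e. y(p+1, λ) = 0 for this λ, where the recurrence potential is V(j) = B j on the interval with Dirichlet conditions y(0) = y(p+1) = 0. -/
/-- For the linear potential `V(j) = B j` with Dirichlet conditions and odd `p`,
`λ = 2 + B (p+1)/2` is an eigenvalue: `y(p+1, λ) = 0`. -/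
theorem midpoint_eigenvalue_linear_potential (B : ℝ) (p : ℕ) (hp : Odd p)
    (y : ℝ → ℕ → ℝ)
    (h0 : ∀ lam : ℝ, y lam 0 = 0)
    (h1 : ∀ lam : ℝ, y lam 1 = 1)
    (hrec : ∀ (lam : ℝ) (j : ℕ),
      y lam (j + 2) = (2 + B * ((j : ℝ) + 1) - lam) * y lam (j + 1) - y lam j) :
    y (2 + B * ((p : ℝ) + 1) / 2) (p + 1) = 0 := by
  obtain ⟨n, rfl⟩ := hp
  set lam : ℝ := 2 + B * ((2 * n + 1 : ℕ) + 1) / 2 with hlamdef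
  have hlam : lam = 2 + B * ((n : ℝ) + 1) := by
    rw [hlamdef]; push_cast; ring
  have key : ∀ k, k ≤ n + 1 → y lam (n + 1 + k) = (-1 : ℝ) ^ k * y lam (n + 1 - k) := by
    intro k
    induction k using Nat.strong_induction_on with
    | _ k ih =>
      match k with
      | 0 => intro _; simp
      | 1 =>
        intro _
        have e := hrec lam n
        have hc : (2 + B * ((n : ℝ) + 1) - lam) = 0 := by rw [hlam]; ring
        rw [hc, zero_mul, zero_sub] at e
        simpa using e
      | (k + 2) =>
        intro hk
        obtain ⟨d, hd⟩ : ∃ d, n = k + 1 + d := ⟨n - (k + 1), by omega⟩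
        have i1 := ih k (by omega) (by omega)
        have i2 := ih (k + 1) (by omega) (by omega)
        have h3 : n + 1 - (k + 2) = d := by omega
        have h4 : n + 1 - k = d + 2 := by omega
        have h5 : n + 1 - (k + 1) = d + 1 := by omega
        rw [h4] at i1
        rw [h5, show n + 1 + (k + 1) = n + 1 + k + 1 by omega] at i2
        have e1 := hrec lam (n + 1 + k)
        have e2 := hrec lam d
        rw [h3]
        show y lam (n + 1 + k + 2) = (-1 : ℝ) ^ (k + 2) * y lam d
        rw [e1, i2, i1, e2, hlam, hd]
        push_cast
        ring
  have := key (n + 1) le_rfl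
  simp only [Nat.sub_self, h0, mul_zero] at this
  have harg : 2 * n + 1 + 1 = n + 1 + (n + 1) := by omega
  rw [harg]
  exact this
end

section
/- For z > 0 and real ν not an integer: J_{ν+3}(z) J_{-ν}(z) + J_{-(ν+3)}(z) J_ν(z) = 2(z² - 4(ν+1)(ν+2)) sin(νπ)/(π z³). -/
/-!
Applying the recurrence `J_{μ-1} + J_{μ+1} = (2μ/z) J_μ` twice to each of `J_{ν+3}` and
`J_{-(ν+3)}` reduces the identity to Lommel's
`J_{ν+1} J_{-ν} + J_{-(ν+1)} J_ν = -2 sin(νπ)/(πz)`, multiplied by `4(ν+1)(ν+2)/z² - 1`.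
Lommel's identity follows from the Cauchy products of the series: a telescoping identity for
reciprocal Gamma values shows that the coefficient of `z^{2n+1}` in `J_{-(ν+1)} J_ν` is minus
that in `J_{-ν} J_{ν+1}`, so only the leading term `(2/z) / (Γ(-ν) Γ(ν+1))` survives, and the
reflection formula evaluates it.
-/

open Real

/-- The Bessel function of the first kind,
`J_μ(z) = ∑_{n≥0} (-1)^n (z/2)^{2n+μ} / (n! Γ(n+μ+1))`. -/
noncomputable def besselJ (μ z : ℝ) : ℝ :=
  ∑' n : ℕ, (-1 : ℝ) ^ n * (z / 2) ^ (2 * (n : ℝ) + μ) /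
    ((n.factorial : ℝ) * Real.Gamma ((n : ℝ) + μ + 1))

open Finset

/-- Since Mathlib sets `Γ = 0` at the poles, this is the entire function `1/Γ`, which vanishes at
`0, -1, -2, …`. -/
noncomputable def invGamma (x : ℝ) : ℝ := (Gamma x)⁻¹

lemma invGamma_zero : invGamma 0 = 0 := by simp [invGamma]

lemma invGamma_one : invGamma 1 = 1 := by simp [invGamma]

lemma invGamma_natCast_add_one (n : ℕ) : invGamma (n + 1) = (n.factorial : ℝ)⁻¹ := by
  rw [invGamma, Gamma_nat_eq_factorial]

lemma invGamma_eq_mul_invGamma_add_one (x : ℝ) : invGamma x = x * invGamma (x + 1) := by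
  rcases ne_or_eq x 0 with hx | rfl
  · rw [invGamma, invGamma, Gamma_add_one hx, mul_inv, mul_inv_cancel_left₀ hx]
  · rw [invGamma_zero, zero_mul]

lemma invGamma_mul_invGamma_one_sub (x : ℝ) :
    invGamma x * invGamma (1 - x) = sin (π * x) / π := by
  rw [invGamma, invGamma, ← mul_inv, Gamma_mul_Gamma_one_sub, inv_div]

lemma abs_invGamma_le_one {x : ℝ} (hx : 2 ≤ x) : |invGamma x| ≤ 1 := by
  have hΓ : 1 ≤ Gamma x := by
    simpa [Gamma_two] using Gamma_strictMonoOn_Ici.monotoneOn (Set.mem_Ici.mpr le_rfl) hx hx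
  rw [invGamma, abs_inv, abs_of_pos (one_pos.trans_le hΓ)]
  exact inv_le_one_of_one_le₀ hΓ

noncomputable def besselTerm (μ z : ℝ) (n : ℕ) : ℝ :=
  (-1) ^ n * (z / 2) ^ (2 * (n : ℝ) + μ) * (invGamma (n + 1) * invGamma (n + μ + 1))

lemma besselJ_eq_tsum_besselTerm (μ z : ℝ) : besselJ μ z = ∑' n, besselTerm μ z n := by
  refine tsum_congr fun n => ?_
  rw [besselTerm, invGamma_natCast_add_one, invGamma, div_eq_mul_inv, mul_inv]

lemma summable_norm_besselTerm (μ : ℝ) {z : ℝ} (hz : 0 < z) :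
    Summable fun n => ‖besselTerm μ z n‖ := by
  have hx : 0 < z / 2 := half_pos hz
  obtain ⟨N, hN⟩ := exists_nat_ge (1 - μ)
  refine Summable.of_norm_bounded_eventually_nat
    ((summable_pow_div_factorial ((z / 2) ^ 2)).mul_left ((z / 2) ^ μ)) ?_
  filter_upwards [Filter.eventually_ge_atTop N] with n hn
  have hN' : (N : ℝ) ≤ n := by exact_mod_cast hn
  have hpow : (z / 2) ^ (2 * (n : ℝ) + μ) = (z / 2) ^ μ * ((z / 2) ^ 2) ^ n := by
    rw [rpow_add hx, mul_comm, ← pow_mul, ← rpow_natCast]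
    push_cast
    rfl
  have hΓ := abs_invGamma_le_one (show (2 : ℝ) ≤ n + μ + 1 by linarith)
  rw [norm_norm, besselTerm, invGamma_natCast_add_one, norm_mul, norm_mul, norm_mul, norm_pow,
    norm_neg, norm_one, one_pow, one_mul, Real.norm_of_nonneg (rpow_nonneg hx.le _), hpow,
    norm_inv, Real.norm_natCast, Real.norm_eq_abs]
  calc _ = (z / 2) ^ μ * (((z / 2) ^ 2) ^ n / n.factorial) * |invGamma (n + μ + 1)| := by ring
    _ ≤ _ := mul_le_of_le_one_right (by positivity) hΓ

lemma HasSum.add_eq_of_succ_add_eq_zero {G : Type*} [AddCommGroup G] [TopologicalSpace G]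
    [IsTopologicalAddGroup G] [T2Space G] {u v : ℕ → G} {a b : G} (hu : HasSum u a)
    (hv : HasSum v b) (h : ∀ n, u (n + 1) + v n = 0) : a + b = u 0 := by
  have := ((hasSum_nat_add_iff' 1).mpr hu).add hv
  simp only [h, sum_range_one] at this
  rw [← sub_eq_zero, ← sub_add_eq_add_sub, ← hasSum_zero.unique this]

lemma hasSum_besselTerm (μ : ℝ) {z : ℝ} (hz : 0 < z) :
    HasSum (besselTerm μ z) (besselJ μ z) := by
  rw [besselJ_eq_tsum_besselTerm]
  exact (summable_norm_besselTerm μ hz).of_norm.hasSum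

lemma besselTerm_sub_one_zero (μ z : ℝ) (hz : 0 < z) :
    besselTerm (μ - 1) z 0 = 2 * μ / z * besselTerm μ z 0 := by
  simp only [besselTerm, pow_zero, one_mul, Nat.cast_zero, mul_zero, zero_add, sub_add_cancel,
    invGamma_one]
  rw [sub_eq_add_neg, rpow_add (half_pos hz), rpow_neg_one, invGamma_eq_mul_invGamma_add_one μ]
  field_simp

lemma besselTerm_sub_one_succ_add (μ z : ℝ) (hz : 0 < z) (n : ℕ) :
    besselTerm (μ - 1) z (n + 1) + besselTerm (μ + 1) z n =
      2 * μ / z * besselTerm μ z (n + 1) := by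
  have hx : z / 2 ≠ 0 := (half_pos hz).ne'
  simp only [besselTerm]
  push_cast
  rw [show 2 * ((n : ℝ) + 1) + (μ - 1) = 2 * n + (μ + 1) by ring,
    show 2 * ((n : ℝ) + 1) + μ = 2 * n + (μ + 1) + 1 by ring, rpow_add_one hx,
    show (n : ℝ) + 1 + (μ - 1) + 1 = n + μ + 1 by ring,
    show (n : ℝ) + (μ + 1) + 1 = n + μ + 1 + 1 by ring,
    show (n : ℝ) + 1 + μ + 1 = n + μ + 1 + 1 by ring,
    invGamma_eq_mul_invGamma_add_one (n + 1), invGamma_eq_mul_invGamma_add_one (n + μ + 1)]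
  field_simp
  ring

theorem besselJ_sub_one_add_besselJ_add_one (μ : ℝ) {z : ℝ} (hz : 0 < z) :
    besselJ (μ - 1) z + besselJ (μ + 1) z = 2 * μ / z * besselJ μ z := by
  have := ((hasSum_besselTerm (μ - 1) hz).sub ((hasSum_besselTerm μ hz).mul_left (2 * μ / z))
    ).add_eq_of_succ_add_eq_zero (hasSum_besselTerm (μ + 1) hz) fun n => by
      rw [sub_add_eq_add_sub, besselTerm_sub_one_succ_add μ z hz, sub_self]
  rw [besselTerm_sub_one_zero μ z hz, sub_self] at this
  linarith

/-- The coefficient of `(-1)ⁿ (z/2)^(2n+a+b)` in the Cauchy product of the series of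
`besselJ a z` and `besselJ b z`. -/
noncomputable def besselProdCoeff (a b : ℝ) (n : ℕ) : ℝ :=
  ∑ k ∈ range (n + 1), invGamma (k + 1) * invGamma (k + a + 1) *
    (invGamma ((n : ℝ) - k + 1) * invGamma ((n : ℝ) - k + b + 1))

lemma besselTerm_mul_besselTerm (a b : ℝ) {z : ℝ} (hz : 0 < z) {k n : ℕ} (hk : k ≤ n) :
    besselTerm a z k * besselTerm b z (n - k) = (-1) ^ n * (z / 2) ^ (2 * (n : ℝ) + a + b) *
      (invGamma (k + 1) * invGamma (k + a + 1) *
        (invGamma ((n : ℝ) - k + 1) * invGamma ((n : ℝ) - k + b + 1))) := by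
  have hpow : (z / 2) ^ (2 * (k : ℝ) + a) * (z / 2) ^ (2 * ((n : ℝ) - k) + b) =
      (z / 2) ^ (2 * (n : ℝ) + a + b) := by
    rw [← rpow_add (half_pos hz)]
    ring_nf
  have hsign : (-1 : ℝ) ^ k * (-1) ^ (n - k) = (-1) ^ n := by
    rw [← pow_add, Nat.add_sub_cancel' hk]
  rw [besselTerm, besselTerm, Nat.cast_sub hk, ← hsign, ← hpow]
  ring

theorem hasSum_besselJ_mul_besselJ (a b : ℝ) {z : ℝ} (hz : 0 < z) :
    HasSum (fun n : ℕ => (-1) ^ n * (z / 2) ^ (2 * (n : ℝ) + a + b) * besselProdCoeff a b n)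
      (besselJ a z * besselJ b z) := by
  have ha := summable_norm_besselTerm a hz
  have hb := summable_norm_besselTerm b hz
  have hprod : HasSum (fun n => ∑ k ∈ range (n + 1), besselTerm a z k * besselTerm b z (n - k))
      (besselJ a z * besselJ b z) := by
    rw [besselJ_eq_tsum_besselTerm, besselJ_eq_tsum_besselTerm,
      tsum_mul_tsum_eq_tsum_sum_range_of_summable_norm ha hb]
    exact (summable_norm_sum_mul_range_of_summable_norm ha hb).of_norm.hasSum
  convert hprod using 2 with n
  rw [besselProdCoeff, mul_sum]
  exact sum_congr rfl fun k hk =>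
    (besselTerm_mul_besselTerm a b hz (Nat.lt_succ_iff.mp (mem_range.mp hk))).symm

-- Both sides are multiples of `1/(Γ(x+1) Γ(x+a+1) Γ(N-x+1) Γ(N-x-a+1))`.
lemma invGamma_telescope_step (a N x : ℝ) :
    N * (invGamma (x + 1) * invGamma (x + a) * invGamma (N - x + 1) * invGamma (N - x - a + 1) -
      invGamma (x + 1) * invGamma (x + a + 1) * invGamma (N - x) * invGamma (N - x - a + 1)) =
    invGamma x * invGamma (x + a) * invGamma (N - x + 1) * invGamma (N - x - a + 1) -
      invGamma (x + 1) * invGamma (x + 1 + a) * invGamma (N - (x + 1) + 1) *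
        invGamma (N - (x + 1) - a + 1) := by
  rw [show N - (x + 1) + 1 = N - x by ring, show N - (x + 1) - a + 1 = N - x - a by ring,
    show x + 1 + a = x + a + 1 by ring, invGamma_eq_mul_invGamma_add_one x,
    invGamma_eq_mul_invGamma_add_one (x + a), invGamma_eq_mul_invGamma_add_one (N - x),
    invGamma_eq_mul_invGamma_add_one (N - x - a)]
  ring

lemma sum_range_invGamma_telescope (a : ℝ) {N : ℕ} (hN : N ≠ 0) :
    ∑ k ∈ range (N + 1), invGamma (k + 1) * invGamma (k + a) * invGamma ((N : ℝ) - k + 1) *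
      invGamma ((N : ℝ) - k - a + 1) =
    ∑ k ∈ range (N + 1), invGamma (k + 1) * invGamma (k + a + 1) * invGamma ((N : ℝ) - k) *
      invGamma ((N : ℝ) - k - a + 1) := by
  set W : ℕ → ℝ := fun k =>
    invGamma k * invGamma (k + a) * invGamma ((N : ℝ) - k + 1) * invGamma ((N : ℝ) - k - a + 1)
  have hW : ∑ k ∈ range (N + 1), (W k - W (k + 1)) = 0 := by
    rw [sum_range_sub']
    simp only [W, Nat.cast_zero, invGamma_zero, zero_mul, Nat.cast_succ,
      show (N : ℝ) - (N + 1) + 1 = 0 by ring, mul_zero, sub_zero]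
  refine eq_of_sub_eq_zero ((mul_eq_zero.mp ?_).resolve_left (Nat.cast_ne_zero.mpr hN))
  rw [← sum_sub_distrib, mul_sum, ← hW]
  refine sum_congr rfl fun k _ => ?_
  simp only [W, Nat.cast_succ]
  exact invGamma_telescope_step a N k

lemma besselProdCoeff_sub_one_neg_succ (a : ℝ) (n : ℕ) :
    besselProdCoeff (a - 1) (-a) (n + 1) = besselProdCoeff a (1 - a) n := by
  have h := sum_range_invGamma_telescope a (N := n + 1) n.succ_ne_zero
  conv_rhs at h =>
    rw [sum_range_succ, Nat.cast_succ, sub_self, invGamma_zero, mul_zero, zero_mul, add_zero]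
  rw [besselProdCoeff, besselProdCoeff]
  convert h using 2 with k _ k _
  · ring_nf
  · ring_nf

theorem besselJ_lommel (ν : ℝ) {z : ℝ} (hz : 0 < z) :
    besselJ (ν + 1) z * besselJ (-ν) z + besselJ (-(ν + 1)) z * besselJ ν z =
      -2 * sin (ν * π) / (π * z) := by
  have hcoeff (n : ℕ) :
      besselProdCoeff (-(ν + 1)) ν (n + 1) = besselProdCoeff (-ν) (ν + 1) n := by
    convert besselProdCoeff_sub_one_neg_succ (-ν) n using 2 <;> ring
  have hsum := (hasSum_besselJ_mul_besselJ (-(ν + 1)) ν hz).add_eq_of_succ_add_eq_zero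
    (hasSum_besselJ_mul_besselJ (-ν) (ν + 1) hz) fun n => by
      rw [hcoeff, show 2 * ((n + 1 : ℕ) : ℝ) + -(ν + 1) + ν = 2 * n + -ν + (ν + 1) by
        push_cast; ring, pow_succ]
      ring
  have hreflect := invGamma_mul_invGamma_one_sub (-ν)
  simp only [besselProdCoeff, zero_add, range_one, sum_singleton, Nat.cast_zero, sub_zero,
    invGamma_one, one_mul, pow_zero, mul_zero] at hsum
  rw [show -(ν + 1) + 1 = -ν by ring, show -(ν + 1) + ν = -1 by ring, rpow_neg_one] at hsum
  rw [show 1 - -ν = ν + 1 by ring, mul_neg, sin_neg] at hreflect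
  rw [mul_comm (besselJ (ν + 1) z), add_comm, hsum, hreflect, mul_comm ν]
  field_simp

theorem bessel_lommel_p2_general (z ν : ℝ) (hz : 0 < z) :
    besselJ (ν + 3) z * besselJ (-ν) z + besselJ (-(ν + 3)) z * besselJ ν z =
      2 * (z ^ 2 - 4 * (ν + 1) * (ν + 2)) * Real.sin (ν * π) / (π * z ^ 3) := by
  have hA2 := besselJ_sub_one_add_besselJ_add_one (ν + 1) hz
  have hA3 := besselJ_sub_one_add_besselJ_add_one (ν + 2) hz
  have hB2 := besselJ_sub_one_add_besselJ_add_one (-(ν + 1)) hz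
  have hB3 := besselJ_sub_one_add_besselJ_add_one (-(ν + 2)) hz
  have hreduce : besselJ (ν + 3) z * besselJ (-ν) z + besselJ (-(ν + 3)) z * besselJ ν z =
      (4 * (ν + 1) * (ν + 2) / z ^ 2 - 1) *
        (besselJ (ν + 1) z * besselJ (-ν) z + besselJ (-(ν + 1)) z * besselJ ν z) := by
    ring_nf at hA2 hA3 hB2 hB3 ⊢
    linear_combination besselJ (-ν) z * hA3 + besselJ ν z * hB3 +
      2 * (ν + 2) / z * besselJ (-ν) z * hA2 - 2 * (ν + 2) / z * besselJ ν z * hB2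
  rw [hreduce, besselJ_lommel ν hz]
  field_simp
  ring

/-- `J_{ν+3}(z) J_{-ν}(z) + J_{-(ν+3)}(z) J_ν(z) = 2(z² - 4(ν+1)(ν+2)) sin(νπ)/(πz³)`. -/
theorem bessel_lommel_p2 (z ν : ℝ) (hz : 0 < z) (hν : ∀ m : ℤ, ν ≠ (m : ℝ)) :
    besselJ (ν + 3) z * besselJ (-ν) z + besselJ (-(ν + 3)) z * besselJ ν z =
      2 * (z ^ 2 - 4 * (ν + 1) * (ν + 2)) * Real.sin (ν * π) / (π * z ^ 3) :=
  bessel_lommel_p2_general z ν hz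
end
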